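/- Let m, n be positive integers with 1 < m < n, and write n = qm + r with 0 ≤ r < m (Euclidean division). Let R = k[x^n, x^{n-1} y, x^{n-m} y^m, y^n]. If r = 0 then R is Cohen–Macaulay; if r ≠ 0 then R is Cohen–Macaulay if and only if q + r ≥ m. -/

import Mathlib

/-! `R` is the semigroup ring `k[S]` of the monoid `S ⊆ ℕ²` generated by `A = (n, 0)`,
`(n - 1, 1)`, `(n - m, m)` and `D = (0, n)`. Hence `x^n R` is spanned by the monomials with
exponent in `A + S`, and `x^n, y^n` is a regular sequence iff `e ∈ S` and `D + e ∈ A + S` imply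
`e ∈ A + S`. The exponents of degree `t` in `S` are the `(tn - v, v)` with `v` a sum of `t`
elements of `{0, 1, m, n}`, so the condition reads: if `v + n` is a sum of `t + 1` such elements,
then `v` is a sum of `t` of them. Replacing `q` copies of `m` and `r` ones by a single `n` proves
this when `r = 0` or `q + r ≥ m`. Otherwise `v = m - 1` is a counterexample:
`m - 1 + n = (q + 1) m + (r - 1)` is a sum of `q + r ≤ m - 1` elements, while `m - 1` is not a sum
of `m - 2`. -/

open MvPolynomial

open scoped Pointwise

theorem RingTheory.Sequence.isRegular_pair_iff {A : Type*} [CommRing A] (x y : A) :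
    IsRegular A [x, y] ↔ IsSMulRegular A x ∧
      (∀ g : A, y * g ∈ Ideal.span {x} → g ∈ Ideal.span {x}) ∧ Ideal.span {x, y} ≠ ⊤ := by
  have hx : x • (⊤ : Submodule A A) = Ideal.span {x} := by
    rw [← Submodule.ideal_span_singleton_smul, smul_eq_mul, Ideal.mul_top]
  rw [isRegular_iff, isWeaklyRegular_cons_iff, isWeaklyRegular_singleton_iff,
    isSMulRegular_quotient_iff_mem_of_smul_mem, hx, smul_eq_mul, Ideal.mul_top, ne_comm,
    Ideal.ofList]
  simp [and_assoc, Set.insert_def]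

theorem MvPolynomial.coe_support_monomial_one_mul {k σ : Type*} [CommSemiring k]
    (a : σ →₀ ℕ) (p : MvPolynomial σ k) :
    ((monomial a 1 * p).support : Set (σ →₀ ℕ)) = a +ᵥ (p.support : Set (σ →₀ ℕ)) := by
  have h : (monomial a 1 * p).support = p.support.map (addLeftEmbedding a) :=
    AddMonoidAlgebra.support_coeff_single_mul p 1 (by simp) a
  rw [h, Finset.coe_map, ← Set.image_vadd]
  rfl

/-- The semigroup ring `k[S]`, `S` the monoid generated by `s`. -/
noncomputable def monomialSubalgebra (k : Type*) [CommSemiring k] {σ : Type*}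
    (s : Set (σ →₀ ℕ)) : Subalgebra k (MvPolynomial σ k) :=
  Algebra.adjoin k ((monomial · 1) '' s)

section MonomialSubalgebra

variable {k σ : Type*} [CommSemiring k] {s : Set (σ →₀ ℕ)}

theorem coe_submonoidClosure_image_monomial :
    (Submonoid.closure ((monomial · (1 : k)) '' s) : Set (MvPolynomial σ k)) =
      (monomial · 1) '' (AddSubmonoid.closure s : Set (σ →₀ ℕ)) := by
  have : (monomial · (1 : k)) = monomialOneHom k σ ∘ Multiplicative.ofAdd := by
    funext e
    exact monomialOneHom_apply.symm
  rw [this, Set.image_comp, ← MonoidHom.map_mclosure, Set.image_comp, Submonoid.coe_map]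
  congr 1
  ext x
  simp [← Multiplicative.toAdd_symm_eq, Equiv.image_eq_preimage_symm,
    ← AddSubmonoid.toSubmonoid_closure]

theorem mem_monomialSubalgebra_iff {p : MvPolynomial σ k} :
    p ∈ monomialSubalgebra k s ↔ ↑p.support ⊆ (AddSubmonoid.closure s : Set (σ →₀ ℕ)) := by
  rw [← Subalgebra.mem_toSubmodule, monomialSubalgebra, Algebra.adjoin_eq_span,
    ← mem_restrictSupport_iff, restrictSupport_eq_span, coe_submonoidClosure_image_monomial]

theorem monomial_mem_monomialSubalgebra {e : σ →₀ ℕ} (he : e ∈ AddSubmonoid.closure s) :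
    monomial e 1 ∈ monomialSubalgebra k s := by
  classical
  rw [mem_monomialSubalgebra_iff, support_monomial]
  split_ifs <;> simp [he]

theorem mem_span_singleton_iff_support_subset {a : σ →₀ ℕ} {x g : monomialSubalgebra k s}
    (hx : (x : MvPolynomial σ k) = monomial a 1) :
    g ∈ Ideal.span {x} ↔
      ↑(g : MvPolynomial σ k).support ⊆ a +ᵥ (AddSubmonoid.closure s : Set (σ →₀ ℕ)) := by
  rw [Ideal.mem_span_singleton']
  constructor
  · rintro ⟨c, rfl⟩
    rw [Subalgebra.coe_mul, hx, mul_comm, coe_support_monomial_one_mul]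
    exact Set.vadd_set_mono (mem_monomialSubalgebra_iff.mp c.2)
  · intro hg
    have hmod : (g : MvPolynomial σ k).modMonomial a = 0 := by
      ext e
      by_cases hae : a ≤ e
      · exact coeff_modMonomial_of_le _ hae
      · rw [coeff_modMonomial_of_not_le _ hae, coeff_zero, ← notMem_support_iff]
        intro he
        obtain ⟨t, -, rfl⟩ := hg he
        exact hae le_self_add
    have hquot : (g : MvPolynomial σ k).divMonomial a ∈ monomialSubalgebra k s := by
      rw [mem_monomialSubalgebra_iff]
      intro t ht
      obtain ⟨t', ht', hsum⟩ :=
        hg (show a + t ∈ (g : MvPolynomial σ k).support by simpa using ht)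
      rwa [← add_left_cancel hsum]
    refine ⟨⟨_, hquot⟩, Subtype.ext ?_⟩
    rw [Subalgebra.coe_mul, hx, mul_comm]
    simpa [hmod] using divMonomial_add_modMonomial (g : MvPolynomial σ k) a

end MonomialSubalgebra

theorem isRegular_monomial_pair_iff {k σ : Type*} [CommRing k] [Nontrivial k]
    {s : Set (σ →₀ ℕ)} {a d : σ →₀ ℕ} (ha : a ≠ 0) (hd : d ≠ 0)
    {x y : monomialSubalgebra k s} (hx : (x : MvPolynomial σ k) = monomial a 1)
    (hy : (y : MvPolynomial σ k) = monomial d 1) :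
    RingTheory.Sequence.IsRegular (monomialSubalgebra k s) [x, y] ↔
      ∀ e ∈ AddSubmonoid.closure s, d + e ∈ a +ᵥ (AddSubmonoid.closure s : Set (σ →₀ ℕ)) →
        e ∈ a +ᵥ (AddSubmonoid.closure s : Set (σ →₀ ℕ)) := by
  have hxreg : IsSMulRegular (monomialSubalgebra k s) x := fun g h hgh =>
    Subtype.ext <| by simpa [hx] using congrArg Subtype.val hgh
  have hspan : Ideal.span {x, y} ≠ ⊤ := by
    rw [Ne, Ideal.eq_top_iff_one, Ideal.mem_span_pair]
    rintro ⟨u, v, huv⟩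
    classical
    simpa [hx, hy, constantCoeff_monomial, ha, hd] using
      congrArg (constantCoeff ∘ Subtype.val) huv
  rw [RingTheory.Sequence.isRegular_pair_iff, and_iff_right hxreg, and_iff_left hspan]
  simp only [mem_span_singleton_iff_support_subset hx, Subalgebra.coe_mul, hy,
    coe_support_monomial_one_mul]
  constructor
  · intro h e he hde
    classical
    have := h ⟨_, monomial_mem_monomialSubalgebra he⟩
    simp only [support_monomial, one_ne_zero, if_false, Finset.coe_singleton,
      Set.vadd_set_singleton, Set.singleton_subset_iff] at this
    exact this hde
  · intro h g hg e he
    exact h e (mem_monomialSubalgebra_iff.mp g.2 he) (hg (Set.vadd_mem_vadd_set he))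

/-- `v` is a sum of `t` elements of `{0, 1, m, n}`. -/
def InSumset (m n t v : ℕ) : Prop :=
  ∃ b c d : ℕ, b + c + d ≤ t ∧ v = b + c * m + d * n

namespace InSumset

variable {m n t t' v v' : ℕ}

theorem add (h : InSumset m n t v) (h' : InSumset m n t' v') :
    InSumset m n (t + t') (v + v') := by
  obtain ⟨b, c, d, hle, rfl⟩ := h
  obtain ⟨b', c', d', hle', rfl⟩ := h'
  exact ⟨b + b', c + c', d + d', by omega, by ring⟩

theorem le_mul (hmn : m ≤ n) (hn : 1 ≤ n) (h : InSumset m n t v) : v ≤ t * n := by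
  obtain ⟨b, c, d, hle, rfl⟩ := h
  calc b + c * m + d * n ≤ b * n + c * n + d * n := by gcongr; nlinarith
    _ = (b + c + d) * n := by ring
    _ ≤ t * n := by gcongr

theorem le_of_lt (hmn : m ≤ n) (h : InSumset m n t v) (hv : v < m) : v ≤ t := by
  obtain ⟨b, c, d, hle, rfl⟩ := h
  obtain rfl : c = 0 := by by_contra hc; nlinarith [Nat.one_le_iff_ne_zero.mpr hc]
  obtain rfl : d = 0 := by by_contra hd; nlinarith [Nat.one_le_iff_ne_zero.mpr hd]
  omega

theorem of_succ_add_right {q r : ℕ} (hmn : m < n) (hdiv : n = q * m + r) (hr : r < m)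
    (hqr : r = 0 ∨ m ≤ q + r) (h : InSumset m n (t + 1) (v + n)) : InSumset m n t v := by
  obtain ⟨b, c, d, hle, hv⟩ := h
  have hq : 0 < q := Nat.pos_of_ne_zero (by rintro rfl; omega)
  rcases d with _ | d
  · rcases lt_or_ge c q with hcq | hqc
    · refine ⟨v, 0, 0, ?_, by ring⟩
      nlinarith
    · obtain ⟨c, rfl⟩ := Nat.exists_eq_add_of_le hqc
      subst hdiv
      rcases le_or_gt r b with hrb | hbr
      · refine ⟨b - r, c, 0, by omega, ?_⟩
        zify [hrb] at hv ⊢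
        linear_combination hv
      · -- the `r` ones are not available: break one more `m` into `r + (m - r)`
        obtain ⟨c, rfl⟩ : ∃ c', c = c' + 1 := by
          refine Nat.exists_eq_add_one.mpr (Nat.pos_of_ne_zero ?_)
          rintro rfl
          nlinarith
        refine ⟨b + m - r, c, 0, by omega, ?_⟩
        zify [(by omega : r ≤ b + m)] at hv ⊢
        linear_combination hv
  · exact ⟨b, c, d, by omega, by linarith⟩

end InSumset

open Finsupp

def curveExponents (m n : ℕ) : Set (Fin 2 →₀ ℕ) :=
  {single 0 n, single 0 (n - 1) + single 1 1, single 0 (n - m) + single 1 m, single 1 n}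

noncomputable def curveSemigroup (m n : ℕ) : AddSubmonoid (Fin 2 →₀ ℕ) :=
  AddSubmonoid.closure (curveExponents m n)

variable {m n : ℕ}

theorem mem_curveSemigroup_iff (hmn : m ≤ n) (hn : 1 ≤ n) {e : Fin 2 →₀ ℕ} :
    e ∈ curveSemigroup m n ↔ ∃ t, e 0 + e 1 = t * n ∧ InSumset m n t (e 1) := by
  constructor
  · intro he
    induction he using AddSubmonoid.closure_induction with
    | mem g hg =>
      rcases hg with rfl | rfl | rfl | rfl
      · exact ⟨1, by simp, 0, 0, 0, by simp, by simp⟩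
      · exact ⟨1, by simp; omega, 1, 0, 0, by simp, by simp⟩
      · exact ⟨1, by simp; omega, 0, 1, 0, by simp, by simp⟩
      · exact ⟨1, by simp, 0, 0, 1, by simp, by simp⟩
    | zero => exact ⟨0, by simp, 0, 0, 0, by simp, by simp⟩
    | add g g' _ _ ih ih' =>
      obtain ⟨t, ht, hg⟩ := ih
      obtain ⟨t', ht', hg'⟩ := ih'
      exact ⟨t + t', by simp only [Finsupp.coe_add, Pi.add_apply]; linarith, hg.add hg'⟩
  · rintro ⟨t, he, b, c, d, hle, hv⟩
    have hdecomp : e = (t - (b + c + d)) • single 0 n + b • (single 0 (n - 1) + single 1 1) +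
        c • (single 0 (n - m) + single 1 m) + d • single 1 n := by
      ext i
      fin_cases i
      · have h0 : e 0 = (t - (b + c + d)) * n + b * (n - 1) + c * (n - m) := by
          zify [hmn, hn, hle] at he hv ⊢
          linear_combination he - hv
        simpa using h0
      · simpa using hv
    have hgen : ∀ g ∈ curveExponents m n, g ∈ curveSemigroup m n :=
      fun g hg => AddSubmonoid.subset_closure hg
    rw [hdecomp]
    refine add_mem (add_mem (add_mem ?_ ?_) ?_) ?_ <;>
      exact nsmul_mem (hgen _ (by simp [curveExponents])) _

theorem mem_vadd_curveSemigroup_iff (hmn : m ≤ n) (hn : 1 ≤ n) {e : Fin 2 →₀ ℕ} :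
    e ∈ single (0 : Fin 2) n +ᵥ (curveSemigroup m n : Set (Fin 2 →₀ ℕ)) ↔
      ∃ t, e 0 + e 1 = (t + 1) * n ∧ InSumset m n t (e 1) := by
  constructor
  · rintro ⟨s, hs, rfl⟩
    obtain ⟨t, hs, hst⟩ := (mem_curveSemigroup_iff hmn hn).mp hs
    refine ⟨t, ?_, by simpa using hst⟩
    simp
    linarith
  · rintro ⟨t, he, ht⟩
    rw [add_one_mul] at he
    have hn0 : n ≤ e 0 := by linarith [ht.le_mul hmn hn]
    refine ⟨e - single 0 n, (mem_curveSemigroup_iff hmn hn).mpr ⟨t, ?_, ?_⟩,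
      add_tsub_cancel_of_le (single_le_iff.mpr hn0)⟩
    · simp
      omega
    · simpa using ht

theorem forall_mem_vadd_curveSemigroup_iff {q r : ℕ} (hmn : m < n) (hdiv : n = q * m + r)
    (hr : r < m) :
    (∀ e ∈ curveSemigroup m n,
      single (1 : Fin 2) n + e ∈ single (0 : Fin 2) n +ᵥ (curveSemigroup m n : Set (Fin 2 →₀ ℕ)) →
        e ∈ single (0 : Fin 2) n +ᵥ (curveSemigroup m n : Set (Fin 2 →₀ ℕ))) ↔
      r = 0 ∨ m ≤ q + r := by
  have hn : 1 ≤ n := by omega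
  have hD (e : Fin 2 →₀ ℕ) :
      single 1 n + e ∈ single (0 : Fin 2) n +ᵥ (curveSemigroup m n : Set (Fin 2 →₀ ℕ)) ↔
        ∃ t, e 0 + e 1 + n = (t + 1) * n ∧ InSumset m n t (e 1 + n) := by
    simp [mem_vadd_curveSemigroup_iff hmn.le hn, add_assoc, add_comm n]
  simp only [hD, mem_vadd_curveSemigroup_iff hmn.le hn]
  constructor
  · intro h
    by_contra! hqr
    have hm : 1 ≤ m := by omega
    have hr1 : 1 ≤ r := by omega
    set e : Fin 2 →₀ ℕ := single 0 ((m - 1) * (n - 1)) + single 1 (m - 1)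
    have he0 : e 0 = (m - 1) * (n - 1) := by simp [e]
    have he1 : e 1 = m - 1 := by simp [e]
    have hsum : e 0 + e 1 = (m - 1) * n := by
      rw [he0, he1]
      zify [hm, hn]
      ring
    have heS : e ∈ curveSemigroup m n :=
      (mem_curveSemigroup_iff hmn.le hn).mpr ⟨m - 1, hsum, m - 1, 0, 0, by omega, by simp [he1]⟩
    obtain ⟨t, ht, hmt⟩ := h e heS ⟨m - 1, by rw [hsum, add_one_mul], r - 1, q + 1, 0,
      by omega, by rw [he1]; zify [hm, hr1] at hdiv ⊢; linear_combination hdiv⟩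
    rw [hsum] at ht
    have htm := Nat.eq_of_mul_eq_mul_right hn ht
    have := (he1 ▸ hmt).le_of_lt hmn.le (by omega)
    omega
  · rintro hqr e - ⟨t, he, ht⟩
    obtain ⟨t, rfl⟩ : ∃ t₀, t = t₀ + 1 := Nat.exists_eq_add_one.mpr <| Nat.pos_of_ne_zero <| by
      rintro rfl
      have := ht.le_mul hmn.le hn
      omega
    exact ⟨t, by linarith, ht.of_succ_add_right hmn hdiv hr hqr⟩

theorem monomial_image_curveExponents {k : Type*} [CommSemiring k] :
    (monomial · (1 : k)) '' curveExponents m n =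
      {X 0 ^ n, X 0 ^ (n - 1) * X 1, X 0 ^ (n - m) * X 1 ^ m, X 1 ^ n} := by
  simp only [curveExponents, Set.image_insert_eq, Set.image_singleton, X, monomial_pow,
    monomial_mul, smul_single, smul_eq_mul, mul_one, one_pow]

theorem stmt_18_general (k : Type*) [Field k] (m n q r : ℕ) (hmn : m < n)
    (hdiv : n = q * m + r) (hr : r < m)
    (R : Subalgebra k (MvPolynomial (Fin 2) k))
    (hR : R = Algebra.adjoin k
      ({X 0 ^ n, X 0 ^ (n - 1) * X 1, X 0 ^ (n - m) * X 1 ^ m, X 1 ^ n} :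
        Set (MvPolynomial (Fin 2) k)))
    (xn yn : R)
    (hxn : (xn : MvPolynomial (Fin 2) k) = X 0 ^ n)
    (hyn : (yn : MvPolynomial (Fin 2) k) = X 1 ^ n) :
    (r = 0 → RingTheory.Sequence.IsRegular R [xn, yn]) ∧
    (r ≠ 0 → (RingTheory.Sequence.IsRegular R [xn, yn] ↔ m ≤ q + r)) := by
  obtain rfl : R = monomialSubalgebra k (curveExponents m n) := by
    rw [hR, monomialSubalgebra, monomial_image_curveExponents]
  have hn : n ≠ 0 := by omega
  have hreg := (isRegular_monomial_pair_iff (by simpa) (by simpa) (hxn.trans X_pow_eq_monomial)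
    (hyn.trans X_pow_eq_monomial)).trans (forall_mem_vadd_curveSemigroup_iff hmn hdiv hr)
  rw [hreg]
  exact ⟨Or.inl, fun hr0 => or_iff_right hr0⟩

/-- Let `1 < m < n`, write `n = qm + r` with `0 ≤ r < m`, and let
`R = k[x^n, x^{n-1}y, x^{n-m}y^m, y^n]`.  If `r = 0` then `R` is Cohen–Macaulay; if `r ≠ 0`
then `R` is Cohen–Macaulay iff `q + r ≥ m`.  (Cohen–Macaulayness is equivalent to `x^n, y^n`
being a regular sequence on `R`.) -/
theorem stmt_18 (k : Type*) [Field k] (m n q r : ℕ) (hm : 1 < m) (hmn : m < n)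
    (hdiv : n = q * m + r) (hr : r < m)
    (R : Subalgebra k (MvPolynomial (Fin 2) k))
    (hR : R = Algebra.adjoin k
      ({X 0 ^ n, X 0 ^ (n - 1) * X 1, X 0 ^ (n - m) * X 1 ^ m, X 1 ^ n} :
        Set (MvPolynomial (Fin 2) k)))
    (xn yn : R)
    (hxn : (xn : MvPolynomial (Fin 2) k) = X 0 ^ n)
    (hyn : (yn : MvPolynomial (Fin 2) k) = X 1 ^ n) :
    (r = 0 → RingTheory.Sequence.IsRegular R [xn, yn]) ∧
    (r ≠ 0 → (RingTheory.Sequence.IsRegular R [xn, yn] ↔ m ≤ q + r)) :=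
  stmt_18_general k m n q r hmn hdiv hr R hR xn yn hxn hyn
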